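/- arXiv:1812.10751 — 7 statements merged into one kernel-verified Lean document; each statement's English description precedes it below -/
import Mathlib

section
/- Let G be a locally compact topological group equipped with a right-invariant Haar measure μ, let τ be a continuous involutive automorphism of G with g* := τ(g)⁻¹, and let S ⊆ G be an open subsemigroup with S* = S. Let φ : S → ℂ be a continuous positive definite function, i.e. the kernel (s,t) ↦ φ(st*) on S × S is positive definite. Then for every continuous compactly supported function ψ : G → ℂ whose support is contained in S, the double integral ∫_S ∫_S conj(ψ(g)) · ψ(h) · φ(g h*) dμ(g) dμ(h) is a nonnegative real number. -/
/-!
Positive definiteness of `φ`, applied to the weights `λᵢ = cᵢ · conj (ψ xᵢ)`, says that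
`Φ (g, h) = conj (ψ g) ψ h φ (g h*)` has `∑ cⱼ cₖ Φ (xⱼ, xₖ) ≥ 0` for all nonnegative `c` and
points of the compact set `K = tsupport ψ`. Continuity of `Φ` on `K × K` and compactness give a
finite measurable partition `(Bⱼ)` of `K` with points `xⱼ` such that `Φ` moves by at most `δ` in
either variable across `Bⱼ`; then the Riemann sum with `cⱼ = μ (Bⱼ)` is within `2 δ μ(K)²` of
`∫_K ∫_K Φ`, which therefore lies in the closed cone `{z : ℂ | 0 ≤ z}` (`ComplexOrder`: `z` real
and nonnegative).
-/

open MeasureTheory Filter Set Topology Function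
open scoped ENNReal ComplexOrder

section RiemannSum

variable {X E ι : Type*} [MeasurableSpace X] [NormedAddCommGroup E] [NormedSpace ℝ E]
  [CompleteSpace E] {μ : Measure X} [Fintype ι] {B : ι → Set X}

theorem norm_setIntegral_sub_sum_le {s : Set X} (hBm : ∀ i, MeasurableSet (B i))
    (hB : Pairwise (Disjoint on B)) (hBs : ⋃ i, B i = s) (hBμ : ∀ i, μ (B i) < ∞) {f : X → E}
    (hf : ∀ i, IntegrableOn f (B i) μ) {a : ι → E} {δ : ℝ}
    (hfa : ∀ i, ∀ x ∈ B i, ‖f x - a i‖ ≤ δ) :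
    ‖∫ x in s, f x ∂μ - ∑ i, μ.real (B i) • a i‖ ≤ δ * μ.real s := by
  subst hBs
  rw [integral_iUnion_fintype hBm hB hf, measureReal_iUnion_fintype hB hBm (fun i => (hBμ i).ne),
    Finset.mul_sum, ← Finset.sum_sub_distrib]
  refine norm_sum_le_of_le _ fun i _ => ?_
  rw [← setIntegral_const, ← integral_sub (hf i) (integrableOn_const (hBμ i).ne)]
  exact norm_setIntegral_le_of_norm_le_const (hBμ i) (hfa i)

end RiemannSum

section Partition

variable {X : Type*} [TopologicalSpace X] [MeasurableSpace X] [OpensMeasurableSpace X]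

theorem IsCompact.exists_measurable_partition_subordinate {K : Set X} (hK : IsCompact K)
    (hKm : MeasurableSet K) (W : X → Set X) (hW : ∀ x ∈ K, W x ∈ 𝓝[K] x) :
    ∃ (n : ℕ) (x : Fin n → X) (B : Fin n → Set X), (∀ i, x i ∈ K) ∧
      (∀ i, MeasurableSet (B i)) ∧ Pairwise (Disjoint on B) ∧ ⋃ i, B i = K ∧
      ∀ i, B i ⊆ W (x i) := by
  choose! O hO hxO hOW using fun x (hx : x ∈ K) => mem_nhdsWithin.mp (hW x hx)
  obtain ⟨t, htK, hKt⟩ := hK.elim_nhds_subcover O fun x hx => (hO x hx).mem_nhds (hxO x hx)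
  set x : Fin t.card → X := fun i => t.equivFin.symm i
  have hxK : ∀ i, x i ∈ K := fun i => htK _ (t.equivFin.symm i).2
  refine ⟨t.card, x, disjointed fun i => O (x i) ∩ K, hxK,
    fun i => disjointedRec (fun _ _ ht => ht.diff ((hO _ (hxK _)).measurableSet.inter hKm))
      ((hO _ (hxK i)).measurableSet.inter hKm),
    disjoint_disjointed _, ?_, fun i => (disjointed_subset _ i).trans (hOW _ (hxK i))⟩
  rw [iUnion_disjointed, ← iUnion_inter]
  refine inter_eq_right.mpr fun g hg => ?_
  obtain ⟨y, hy, hgy⟩ := mem_iUnion₂.mp (hKt hg)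
  exact mem_iUnion.mpr ⟨t.equivFin ⟨y, hy⟩, by simpa [x] using hgy⟩

end Partition

section ParametricIntegral

variable {X Y E : Type*} [TopologicalSpace X] [TopologicalSpace Y] [MeasurableSpace Y]
  [OpensMeasurableSpace Y] [NormedAddCommGroup E] [NormedSpace ℝ E]

theorem IsCompact.continuousOn_setIntegral (μ : Measure Y) [IsFiniteMeasureOnCompacts μ]
    {s : Set X} {L : Set Y} (hL : IsCompact L) (hLm : MeasurableSet L) {f : X → Y → E}
    (hf : ContinuousOn f.uncurry (s ×ˢ L)) :
    ContinuousOn (fun x => ∫ y in L, f x y ∂μ) s := by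
  have hint : ∀ x ∈ s, IntegrableOn (f x) L μ := fun x hx =>
    (hf.comp (Continuous.prodMk_right x).continuousOn fun y hy => ⟨hx, hy⟩).integrableOn_compact'
      hL hLm
  intro q hq
  refine Metric.continuousWithinAt_iff'.mpr fun ε hε => ?_
  obtain ⟨δ, hδ, hδε⟩ := exists_pos_mul_lt hε (μ.real L)
  obtain ⟨v, hv, hvq⟩ := hL.mem_uniformity_of_prod hf hq (Metric.dist_mem_uniformity hδ)
  filter_upwards [hv, self_mem_nhdsWithin] with p hp hps
  rw [dist_eq_norm, ← integral_sub (hint p hps) (hint q hq)]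
  refine (norm_setIntegral_le_of_norm_le_const (C := δ) hL.measure_lt_top fun y hy => ?_).trans_lt
    (by rwa [mul_comm])
  rw [← dist_eq_norm]
  exact (hvq p hp y hy).le

end ParametricIntegral

section PositiveKernel

variable {X : Type*} [TopologicalSpace X]

theorem IsCompact.eventually_forall_norm_sub_le {E : Type*} [SeminormedAddCommGroup E]
    {K : Set X} (hK : IsCompact K) {Φ : X × X → E} (hΦ : ContinuousOn Φ (K ×ˢ K)) {x : X}
    (hx : x ∈ K) {δ : ℝ} (hδ : 0 < δ) :
    ∀ᶠ y in 𝓝[K] x, ∀ g ∈ K, ‖Φ (g, y) - Φ (g, x)‖ ≤ δ ∧ ‖Φ (y, g) - Φ (x, g)‖ ≤ δ := by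
  obtain ⟨v, hv, hvx⟩ := hK.mem_uniformity_of_prod (f := fun y g => Φ (y, g)) hΦ hx
    (Metric.dist_mem_uniformity hδ)
  obtain ⟨w, hw, hwx⟩ := hK.mem_uniformity_of_prod (f := fun y g => Φ (g, y))
    (hΦ.comp continuous_swap.continuousOn (mapsTo_swap_prod K K)) hx (Metric.dist_mem_uniformity hδ)
  filter_upwards [hv, hw] with y hyv hyw g hg
  simp only [← dist_eq_norm]
  exact ⟨(hwx y hyw g hg).le, (hvx y hyv g hg).le⟩

variable [MeasurableSpace X] [OpensMeasurableSpace X] (μ : Measure X) [IsFiniteMeasureOnCompacts μ]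
  {K : Set X} {Φ : X × X → ℂ}

theorem norm_setIntegral_setIntegral_sub_sum_le (hK : IsCompact K) (hKm : MeasurableSet K)
    (hΦ : ContinuousOn Φ (K ×ˢ K)) {n : ℕ} {B : Fin n → Set X} {x : Fin n → X}
    (hx : ∀ i, x i ∈ K) (hBm : ∀ i, MeasurableSet (B i)) (hB : Pairwise (Disjoint on B))
    (hBK : ⋃ i, B i = K) {δ : ℝ} (hΦB : ∀ i, ∀ y ∈ B i, ∀ g ∈ K,
      ‖Φ (g, y) - Φ (g, x i)‖ ≤ δ ∧ ‖Φ (y, g) - Φ (x i, g)‖ ≤ δ) :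
    ‖∫ g in K, ∫ h in K, Φ (g, h) ∂μ ∂μ -
        ∑ j, μ.real (B j) • ∑ k, μ.real (B k) • Φ (x j, x k)‖ ≤
      δ * μ.real K * μ.real K + δ * μ.real K * μ.real K := by
  have hBsub : ∀ i, B i ⊆ K := fun i => hBK ▸ subset_iUnion B i
  have hBμ : ∀ i, μ (B i) < ∞ := fun i => measure_lt_top_of_subset (hBsub i) hK.measure_ne_top
  set F : X → ℂ := fun g => ∑ k, μ.real (B k) • Φ (g, x k)
  set G : X → ℂ := fun g => ∫ h in K, Φ (g, h) ∂μ
  have hΦ_left : ∀ g ∈ K, ContinuousOn (fun h => Φ (g, h)) K := fun g hg =>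
    hΦ.comp (Continuous.prodMk_right g).continuousOn fun h hh => ⟨hg, hh⟩
  have hGF : ∀ g ∈ K, ‖G g - F g‖ ≤ δ * μ.real K := fun g hg => by
    refine norm_setIntegral_sub_sum_le hBm hB hBK hBμ
      (fun k => ((hΦ_left g hg).integrableOn_compact' hK hKm).mono_set (hBsub k)) ?_
    exact fun k h hh => (hΦB k h hh g hg).1
  have hF : ∀ j, ∀ g ∈ B j, ‖F g - F (x j)‖ ≤ δ * μ.real K := fun j g hg => by
    rw [← hBK, measureReal_iUnion_fintype hB hBm (fun i => (hBμ i).ne), Finset.mul_sum,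
      ← Finset.sum_sub_distrib]
    refine norm_sum_le_of_le _ fun k _ => ?_
    rw [← smul_sub, norm_smul, Real.norm_of_nonneg measureReal_nonneg, mul_comm]
    exact mul_le_mul_of_nonneg_right (hΦB j g hg (x k) (hx k)).2 measureReal_nonneg
  have hGint : IntegrableOn G K μ :=
    (hK.continuousOn_setIntegral μ hKm (f := fun g h => Φ (g, h)) hΦ).integrableOn_compact' hK hKm
  have hFint : IntegrableOn F K μ := by
    refine ContinuousOn.integrableOn_compact' hK hKm (continuousOn_finsetSum _ fun k _ => ?_)
    exact (continuousOn_const (c := μ.real (B k))).smul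
      (hΦ.comp (Continuous.prodMk_left (x k)).continuousOn fun g hg => ⟨hg, hx k⟩)
  calc ‖∫ g in K, G g ∂μ - ∑ j, μ.real (B j) • F (x j)‖
      ≤ ‖∫ g in K, G g ∂μ - ∫ g in K, F g ∂μ‖ + ‖∫ g in K, F g ∂μ - ∑ j, μ.real (B j) • F (x j)‖ :=
        norm_sub_le_norm_sub_add_norm_sub _ _ _
    _ ≤ δ * μ.real K * μ.real K + δ * μ.real K * μ.real K := by
      gcongr
      · rw [← integral_sub hGint hFint]
        exact norm_setIntegral_le_of_norm_le_const hK.measure_lt_top hGF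
      · exact norm_setIntegral_sub_sum_le hBm hB hBK hBμ
          (fun j => hFint.mono_set (hBsub j)) hF

theorem setIntegral_setIntegral_nonneg_of_sum_nonneg (hK : IsCompact K) (hKm : MeasurableSet K)
    (hΦ : ContinuousOn Φ (K ×ˢ K))
    (hpos : ∀ (n : ℕ) (x : Fin n → X), (∀ i, x i ∈ K) → ∀ c : Fin n → ℝ, (∀ i, 0 ≤ c i) →
      0 ≤ ∑ j, ∑ k, (c j : ℂ) * c k * Φ (x j, x k)) :
    0 ≤ ∫ g in K, ∫ h in K, Φ (g, h) ∂μ ∂μ := by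
  rw [← mem_Ici, ← isClosed_Ici.closure_eq]
  refine Metric.mem_closure_iff.mpr fun ε hε => ?_
  obtain ⟨δ, hδ, hδε⟩ := exists_pos_mul_lt hε (2 * μ.real K * μ.real K)
  obtain ⟨n, x, B, hx, hBm, hB, hBK, hBW⟩ := hK.exists_measurable_partition_subordinate hKm _
    fun x hx => hK.eventually_forall_norm_sub_le hΦ hx hδ
  refine ⟨_, hpos n x hx (fun i => μ.real (B i)) fun i => measureReal_nonneg, ?_⟩
  have hsum : ∑ j, ∑ k, (μ.real (B j) : ℂ) * μ.real (B k) * Φ (x j, x k) =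
      ∑ j, μ.real (B j) • ∑ k, μ.real (B k) • Φ (x j, x k) := by
    simp only [Finset.smul_sum, Complex.real_smul, mul_assoc]
  rw [dist_eq_norm, hsum]
  calc _ ≤ δ * μ.real K * μ.real K + δ * μ.real K * μ.real K :=
        norm_setIntegral_setIntegral_sub_sum_le μ hK hKm hΦ hx hBm hB hBK fun i y hy => hBW i hy
    _ < ε := by linarith

end PositiveKernel

theorem stmt_0_general {G : Type*} [Group G] [TopologicalSpace G] [IsTopologicalGroup G]
    [MeasurableSpace G] [BorelSpace G]
    (μ : Measure G) [IsFiniteMeasureOnCompacts μ]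
    (τ : G →* G) (hτ_cont : Continuous τ)
    (S : Set G) (hS_open : IsOpen S)
    (hS_mul : ∀ a ∈ S, ∀ b ∈ S, a * b ∈ S)
    (hS_star : ∀ s ∈ S, (τ s)⁻¹ ∈ S)
    (φ : G → ℂ) (hφ_cont : ContinuousOn φ S)
    (hφ_pd : ∀ (n : ℕ) (x : Fin n → G), (∀ j, x j ∈ S) → ∀ lam : Fin n → ℂ,
      ∃ r : ℝ, 0 ≤ r ∧
        ∑ j, ∑ k, lam j * (starRingEnd ℂ) (lam k) * φ (x j * (τ (x k))⁻¹) = r)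
    (ψ : G → ℂ) (hψ_cont : Continuous ψ) (hψ_supp : HasCompactSupport ψ)
    (hψ_S : tsupport ψ ⊆ S) :
    ∃ r : ℝ, 0 ≤ r ∧
      (∫ g in S, ∫ h in S,
        (starRingEnd ℂ) (ψ g) * ψ h * φ (g * (τ h)⁻¹) ∂μ ∂μ) = r := by
  set Φ : G × G → ℂ := fun p => starRingEnd ℂ (ψ p.1) * ψ p.2 * φ (p.1 * (τ p.2)⁻¹)
  have hψ0 : ∀ g ∉ tsupport ψ, ψ g = 0 := fun g => image_eq_zero_of_notMem_tsupport
  have hΦ : ContinuousOn Φ (tsupport ψ ×ˢ tsupport ψ) :=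
    ContinuousOn.mul (by fun_prop) <| hφ_cont.comp (by fun_prop) fun p hp =>
      hS_mul _ (hψ_S hp.1) _ (hS_star _ (hψ_S hp.2))
  have hpos : ∀ (n : ℕ) (x : Fin n → G), (∀ i, x i ∈ tsupport ψ) → ∀ c : Fin n → ℝ,
      (∀ i, 0 ≤ c i) → 0 ≤ ∑ j, ∑ k, (c j : ℂ) * c k * Φ (x j, x k) := by
    intro n x hx c _
    obtain ⟨r, hr, hsum⟩ := hφ_pd n x (fun i => hψ_S (hx i)) fun i => c i * starRingEnd ℂ (ψ (x i))
    calc (0 : ℂ) ≤ r := Complex.zero_le_real.mpr hr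
      _ = _ := by
        rw [← hsum]
        refine Finset.sum_congr rfl fun j _ => Finset.sum_congr rfl fun k _ => ?_
        simp only [Φ, map_mul, Complex.conj_conj, Complex.conj_ofReal]
        ring
  obtain ⟨r, hr, hz⟩ := RCLike.nonneg_iff_exists_ofReal.mp <|
    setIntegral_setIntegral_nonneg_of_sum_nonneg μ hψ_supp (isClosed_tsupport ψ).measurableSet
      hΦ hpos
  refine ⟨r, hr, ?_⟩
  rw [setIntegral_eq_of_subset_of_forall_sdiff_eq_zero hS_open.measurableSet hψ_S
    fun g hg => by simp [hψ0 g hg.2]]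
  refine (integral_congr_ae (Eventually.of_forall fun g => ?_)).trans hz.symm
  exact setIntegral_eq_of_subset_of_forall_sdiff_eq_zero hS_open.measurableSet hψ_S
    fun h hh => by simp [hψ0 h hh.2]

/-- For a continuous positive definite function `φ` on an open
`*`-subsemigroup `S` of a locally compact group `G` with right-invariant Haar measure `μ`,
the double integral `∫∫ conj (ψ g) * ψ h * φ (g * (τ h)⁻¹)` over `S × S` is a nonnegative
real number, for every continuous compactly supported `ψ` with support in `S`. -/
theorem stmt_0 {G : Type*} [Group G] [TopologicalSpace G] [IsTopologicalGroup G]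
    [LocallyCompactSpace G] [MeasurableSpace G] [BorelSpace G]
    (μ : Measure G) [μ.IsMulRightInvariant] [IsFiniteMeasureOnCompacts μ]
    [μ.IsOpenPosMeasure]
    (τ : G →* G) (hτ_inv : Function.Involutive τ) (hτ_cont : Continuous τ)
    (S : Set G) (hS_open : IsOpen S)
    (hS_mul : ∀ a ∈ S, ∀ b ∈ S, a * b ∈ S)
    (hS_star : ∀ s ∈ S, (τ s)⁻¹ ∈ S)
    (φ : G → ℂ) (hφ_cont : ContinuousOn φ S)
    (hφ_pd : ∀ (n : ℕ) (x : Fin n → G), (∀ j, x j ∈ S) → ∀ lam : Fin n → ℂ,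
      ∃ r : ℝ, 0 ≤ r ∧
        ∑ j, ∑ k, lam j * (starRingEnd ℂ) (lam k) * φ (x j * (τ (x k))⁻¹) = r)
    (ψ : G → ℂ) (hψ_cont : Continuous ψ) (hψ_supp : HasCompactSupport ψ)
    (hψ_S : tsupport ψ ⊆ S) :
    ∃ r : ℝ, 0 ≤ r ∧
      (∫ g in S, ∫ h in S,
        (starRingEnd ℂ) (ψ g) * ψ h * φ (g * (τ h)⁻¹) ∂μ ∂μ) = r :=
  stmt_0_general μ τ hτ_cont S hS_open hS_mul hS_star φ hφ_cont hφ_pd ψ hψ_cont hψ_supp hψ_S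
end

section
/- Let G be a locally compact topological group with right-invariant Haar measure μ, τ a continuous involutive automorphism of G, g* := τ(g)⁻¹, and S ⊆ G an open *-subsemigroup. Let π : S → B(H) be a strongly continuous *-representation on a complex Hilbert space H and let v ∈ H be a cyclic vector, i.e. span{π(s)v : s ∈ S} is dense in H. For a continuous compactly supported ψ : G → ℂ with supp(ψ) ⊆ S define γ(ψ) := ∫_S ψ(s) π(s*) v dμ(s) (Bochner integral). Then the linear span of {γ(ψ) : ψ continuous with compact support in S} is dense in H. -/
open MeasureTheory Set Function

/-!
The vectors `γ(ψ)` are smeared orbit vectors: `s ↦ π(s*) v` is continuous on `S` and equals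
`π(t) v` at `s = t*`, so averaging it against a nonnegative bump of mass one supported near `t*`
gives a `γ(ψ)` arbitrarily close to `π(t) v`. Thus the closed span of the `γ(ψ)` contains the
orbit of `v`, hence is `H` by cyclicity.
-/

section Averaging

variable {X E : Type*} [MeasurableSpace X] {μ : Measure X}
  [NormedAddCommGroup E] [NormedSpace ℝ E] [CompleteSpace E]

theorem norm_integral_smul_sub_le {φ : X → ℝ} {f : X → E} {y : E} {ε : ℝ}
    (hφ_nonneg : 0 ≤ φ) (hφ_int : Integrable φ μ) (hφ_one : ∫ x, φ x ∂μ = 1)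
    (hφf_int : Integrable (fun x => φ x • f x) μ) (hf : ∀ x ∈ support φ, ‖f x - y‖ ≤ ε) :
    ‖∫ x, φ x • f x ∂μ - y‖ ≤ ε := by
  have h_pointwise (x : X) : ‖φ x • (f x - y)‖ ≤ φ x * ε := by
    rw [norm_smul, Real.norm_of_nonneg (hφ_nonneg x)]
    by_cases hx : φ x = 0
    · simp [hx]
    · exact mul_le_mul_of_nonneg_left (hf x hx) (hφ_nonneg x)
  calc ‖∫ x, φ x • f x ∂μ - y‖ = ‖∫ x, φ x • (f x - y) ∂μ‖ := by
        simp_rw [smul_sub]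
        rw [integral_sub hφf_int (hφ_int.smul_const y), integral_smul_const, hφ_one, one_smul]
    _ ≤ ∫ x, φ x * ε ∂μ :=
        norm_integral_le_of_norm_le (hφ_int.mul_const ε) (.of_forall h_pointwise)
    _ = ε := by rw [integral_mul_const, hφ_one, one_mul]

end Averaging

section Bump

variable {X : Type*} [TopologicalSpace X] [R1Space X] [LocallyCompactSpace X]
  [MeasurableSpace X] [OpensMeasurableSpace X]
  (μ : Measure X) [μ.IsOpenPosMeasure] [IsFiniteMeasureOnCompacts μ]

theorem exists_continuous_nonneg_integral_eq_one {U : Set X} (hU : IsOpen U) (hne : U.Nonempty) :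
    ∃ φ : X → ℝ, Continuous φ ∧ HasCompactSupport φ ∧ tsupport φ ⊆ U ∧ 0 ≤ φ ∧
      ∫ x, φ x ∂μ = 1 := by
  obtain ⟨x₀, hx₀⟩ := hne
  obtain ⟨g, hg_one, hg_comp, hg_supp, hg_range⟩ :=
    exists_continuousMap_one_of_isCompact_subset_isOpen isCompact_singleton hU
      (singleton_subset_iff.mpr hx₀)
  have hg_nonneg : 0 ≤ (g : X → ℝ) := fun x => (hg_range x).1
  have hg_pos : 0 < ∫ x, g x ∂μ :=
    g.continuous.integral_pos_of_hasCompactSupport_nonneg_nonzero hg_comp hg_nonneg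
      (x := x₀) (by simp [hg_one rfl])
  refine ⟨fun x => (∫ x, g x ∂μ)⁻¹ * g x, by fun_prop, HasCompactSupport.mul_left hg_comp,
    (tsupport_mul_subset_right).trans hg_supp,
    fun x => mul_nonneg (inv_nonneg.mpr hg_pos.le) (hg_nonneg x), ?_⟩
  rw [integral_const_mul, inv_mul_cancel₀ hg_pos.ne']

end Bump

section ApproximateIdentity

variable {X E : Type*} [TopologicalSpace X] [R1Space X] [LocallyCompactSpace X]
  [MeasurableSpace X] [OpensMeasurableSpace X]
  (μ : Measure X) [μ.IsOpenPosMeasure] [IsFiniteMeasureOnCompacts μ]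
  [NormedAddCommGroup E] [NormedSpace ℂ E] [CompleteSpace E]

theorem ContinuousOn.mem_closure_setIntegral_smul {S : Set X} (hS : IsOpen S) {f : X → E}
    (hf : ContinuousOn f S) {x₀ : X} (hx₀ : x₀ ∈ S) :
    f x₀ ∈ closure {w : E | ∃ ψ : X → ℂ, Continuous ψ ∧ HasCompactSupport ψ ∧
      tsupport ψ ⊆ S ∧ w = ∫ x in S, ψ x • f x ∂μ} := by
  refine Metric.mem_closure_iff.mpr fun ε hε => ?_
  set U := S ∩ f ⁻¹' Metric.ball (f x₀) (ε / 2)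
  have hU : IsOpen U := hf.isOpen_inter_preimage hS Metric.isOpen_ball
  obtain ⟨φ, hφ_cont, hφ_comp, hφ_supp, hφ_nonneg, hφ_one⟩ :=
    exists_continuous_nonneg_integral_eq_one μ hU ⟨x₀, hx₀, Metric.mem_ball_self (by positivity)⟩
  have hφS : tsupport φ ⊆ S := hφ_supp.trans inter_subset_left
  have hφf_cont : Continuous fun x => φ x • f x :=
    (hφ_cont.continuousOn.smul hf).continuous_of_tsupport_subset hS
      ((tsupport_smul_subset_left φ f).trans hφS)
  have hφf_int : Integrable (fun x => φ x • f x) μ :=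
    hφf_cont.integrable_of_hasCompactSupport (hφ_comp.smul_right)
  have h_eq : ∫ x in S, (φ x : ℂ) • f x ∂μ = ∫ x, φ x • f x ∂μ := by
    simp_rw [Complex.coe_smul]
    refine setIntegral_eq_integral_of_forall_compl_eq_zero fun x hx => ?_
    rw [image_eq_zero_of_notMem_tsupport (fun h => hx (hφS h)), zero_smul]
  refine ⟨_, ⟨fun x => (φ x : ℂ), by fun_prop, hφ_comp.comp_left Complex.ofReal_zero,
    (tsupport_comp_subset Complex.ofReal_zero _).trans hφS, rfl⟩, ?_⟩
  rw [h_eq, dist_comm, dist_eq_norm]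
  refine (norm_integral_smul_sub_le hφ_nonneg (hφ_cont.integrable_of_hasCompactSupport hφ_comp)
    hφ_one hφf_int fun x hx => ?_).trans_lt (half_lt_self hε)
  have hxU : x ∈ U := hφ_supp (subset_tsupport φ hx)
  exact (mem_ball_iff_norm.mp hxU.2).le

end ApproximateIdentity

theorem stmt_2_general {G : Type*} [Group G] [TopologicalSpace G] [IsTopologicalGroup G]
    [LocallyCompactSpace G] [MeasurableSpace G] [BorelSpace G]
    (μ : Measure G) [IsFiniteMeasureOnCompacts μ]
    [μ.IsOpenPosMeasure]
    {H : Type*} [NormedAddCommGroup H] [InnerProductSpace ℂ H] [CompleteSpace H]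
    (τ : G →* G) (hτ_inv : Function.Involutive τ) (hτ_cont : Continuous τ)
    (S : Set G) (hS_open : IsOpen S)
    (hS_star : ∀ s ∈ S, (τ s)⁻¹ ∈ S)
    (π : G → H →L[ℂ] H)
    (hπ_cont : ∀ v : H, ContinuousOn (fun s => (π s) v) S)
    (v : H)
    (hcyc : Dense (↑(Submodule.span ℂ {w : H | ∃ s ∈ S, w = (π s) v}) : Set H)) :
    Dense (↑(Submodule.span ℂ
      {w : H | ∃ ψ : G → ℂ, Continuous ψ ∧ HasCompactSupport ψ ∧ tsupport ψ ⊆ S ∧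
        w = ∫ s in S, ψ s • (π ((τ s)⁻¹)) v ∂μ}) : Set H) := by
  set Γ := {w : H | ∃ ψ : G → ℂ, Continuous ψ ∧ HasCompactSupport ψ ∧ tsupport ψ ⊆ S ∧
    w = ∫ s in S, ψ s • (π ((τ s)⁻¹)) v ∂μ}
  have hf : ContinuousOn (fun s => π (τ s)⁻¹ v) S :=
    (hπ_cont v).comp (hτ_cont.inv.continuousOn) hS_star
  have h_orbit : Submodule.span ℂ {w : H | ∃ s ∈ S, w = (π s) v} ≤
      (Submodule.span ℂ Γ).topologicalClosure := by
    rw [Submodule.span_le]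
    rintro _ ⟨t, ht, rfl⟩
    have h_mem := hf.mem_closure_setIntegral_smul μ hS_open (hS_star t ht)
    rw [map_inv, hτ_inv t, inv_inv] at h_mem
    exact closure_mono Submodule.subset_span h_mem
  exact Dense.of_closure (hcyc.mono h_orbit)

/-- For a strongly continuous `*`-representation `π` of an open
`*`-subsemigroup `S` with cyclic vector `v`, the span of the vectors
`γ(ψ) = ∫_S ψ(s) • π(s*) v dμ(s)`, where `ψ` ranges over continuous compactly supported
functions with support in `S`, is dense in `H`. -/
theorem stmt_2 {G : Type*} [Group G] [TopologicalSpace G] [IsTopologicalGroup G]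
    [LocallyCompactSpace G] [MeasurableSpace G] [BorelSpace G]
    (μ : Measure G) [μ.IsMulRightInvariant] [IsFiniteMeasureOnCompacts μ]
    [μ.IsOpenPosMeasure]
    {H : Type*} [NormedAddCommGroup H] [InnerProductSpace ℂ H] [CompleteSpace H]
    (τ : G →* G) (hτ_inv : Function.Involutive τ) (hτ_cont : Continuous τ)
    (S : Set G) (hS_open : IsOpen S)
    (hS_mul : ∀ a ∈ S, ∀ b ∈ S, a * b ∈ S)
    (hS_star : ∀ s ∈ S, (τ s)⁻¹ ∈ S)
    (π : G → H →L[ℂ] H)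
    (hπ_mul : ∀ a ∈ S, ∀ b ∈ S, π (a * b) = π a ∘L π b)
    (hπ_star : ∀ s ∈ S, π ((τ s)⁻¹) = ContinuousLinearMap.adjoint (π s))
    (hπ_cont : ∀ v : H, ContinuousOn (fun s => (π s) v) S)
    (v : H)
    (hcyc : Dense (↑(Submodule.span ℂ {w : H | ∃ s ∈ S, w = (π s) v}) : Set H)) :
    Dense (↑(Submodule.span ℂ
      {w : H | ∃ ψ : G → ℂ, Continuous ψ ∧ HasCompactSupport ψ ∧ tsupport ψ ⊆ S ∧
        w = ∫ s in S, ψ s • (π ((τ s)⁻¹)) v ∂μ}) : Set H) :=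
  stmt_2_general μ τ hτ_inv hτ_cont S hS_open hS_star π hπ_cont v hcyc
end

section
/- Let G be a group with an involutive automorphism τ, g* := τ(g)⁻¹, S ⊆ G a *-subsemigroup, and π : S → B(H) a *-representation on a complex Hilbert space H. Let h ∈ G satisfy τ(h) = h, and set S_h := {s ∈ S : h s ∈ S}. Suppose that span{π(s)v : s ∈ S_h, v ∈ H} and span{π(h s)v : s ∈ S_h, v ∈ H} are both dense in H. Then there exists a unique unitary operator U on H such that π(h s) = U ∘ π(s) for all s ∈ S_h. -/
/-! Since `τ h = h`, we have `(h s)* (h t) = s* t`, so the families `π(s)x` and `π(hs)x`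
(indexed by `s ∈ S_h`, `x ∈ H`) have the same Gram matrix. Two families with equal Gram matrices
and dense spans differ by a unique unitary: the map `∑ cᵢ vᵢ ↦ ∑ cᵢ wᵢ` is well defined and
isometric, and extends by continuity to a surjective isometry. -/

open Set Submodule

theorem Finsupp.inner_linearCombination_eq_of_inner_eq {𝕜 ι E F : Type*} [RCLike 𝕜]
    [NormedAddCommGroup E] [InnerProductSpace 𝕜 E] [NormedAddCommGroup F] [InnerProductSpace 𝕜 F]
    {v : ι → E} {w : ι → F} (h : ∀ i j, inner 𝕜 (w i) (w j) = inner 𝕜 (v i) (v j))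
    (l l' : ι →₀ 𝕜) :
    inner 𝕜 (linearCombination 𝕜 w l) (linearCombination 𝕜 w l') =
      inner 𝕜 (linearCombination 𝕜 v l) (linearCombination 𝕜 v l') := by
  simp only [linearCombination_apply, Finsupp.sum, sum_inner, inner_sum, inner_smul_left,
    inner_smul_right, h]

theorem Finsupp.denseRange_linearCombination_iff {R ι M : Type*} [Semiring R] [AddCommMonoid M]
    [Module R M] [TopologicalSpace M] {v : ι → M} :
    DenseRange (linearCombination R v) ↔ Dense (span R (range v) : Set M) := by
  rw [DenseRange, ← LinearMap.coe_range, range_linearCombination]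

theorem exists_linearIsometryEquiv_apply_eq_of_inner_eq {𝕜 ι E F : Type*} [RCLike 𝕜]
    [NormedAddCommGroup E] [InnerProductSpace 𝕜 E] [CompleteSpace E]
    [NormedAddCommGroup F] [InnerProductSpace 𝕜 F] [CompleteSpace F]
    {v : ι → E} {w : ι → F} (hv : Dense (span 𝕜 (range v) : Set E))
    (hw : Dense (span 𝕜 (range w) : Set F))
    (h : ∀ i j, inner 𝕜 (w i) (w j) = inner 𝕜 (v i) (v j)) :
    ∃ U : E ≃ₗᵢ[𝕜] F, ∀ i, U (v i) = w i := by
  rw [← Finsupp.denseRange_linearCombination_iff] at hv hw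
  have h_norm (l : ι →₀ 𝕜) :
      ‖Finsupp.linearCombination 𝕜 w l‖ = ‖Finsupp.linearCombination 𝕜 v l‖ := by
    rw [norm_eq_sqrt_re_inner (𝕜 := 𝕜), norm_eq_sqrt_re_inner (𝕜 := 𝕜),
      Finsupp.inner_linearCombination_eq_of_inner_eq h]
  refine ⟨(LinearEquiv.refl 𝕜 (ι →₀ 𝕜)).extendOfIsometry _ _ hv hw h_norm, fun i ↦ ?_⟩
  simpa using LinearEquiv.extendOfIsometry_eq (LinearEquiv.refl 𝕜 (ι →₀ 𝕜)) _ _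
    hv hw h_norm (Finsupp.single i 1)

theorem inner_apply_mul_left_eq_of_fixed {G H : Type*} [Group G]
    [NormedAddCommGroup H] [InnerProductSpace ℂ H] [CompleteSpace H]
    {τ : G →* G} {S : Set G} (hS_star : ∀ s ∈ S, (τ s)⁻¹ ∈ S) {π : G → H →L[ℂ] H}
    (hπ_mul : ∀ a ∈ S, ∀ b ∈ S, π (a * b) = π a ∘L π b)
    (hπ_star : ∀ s ∈ S, π ((τ s)⁻¹) = ContinuousLinearMap.adjoint (π s))
    {h : G} (hh : τ h = h) {s t : G} (hs : s ∈ S) (hhs : h * s ∈ S) (ht : t ∈ S)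
    (hht : h * t ∈ S) (x y : H) :
    inner ℂ (π (h * s) x) (π (h * t) y) = inner ℂ (π s x) (π t y) := by
  have h_cancel : (τ (h * s))⁻¹ * (h * t) = (τ s)⁻¹ * t := by
    rw [map_mul, hh]; group
  rw [← ContinuousLinearMap.adjoint_inner_right, ← ContinuousLinearMap.adjoint_inner_right,
    ← hπ_star _ hhs, ← hπ_star _ hs, ← ContinuousLinearMap.comp_apply,
    ← ContinuousLinearMap.comp_apply, ← hπ_mul _ (hS_star _ hhs) _ hht,
    ← hπ_mul _ (hS_star _ hs) _ ht, h_cancel]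

theorem stmt_5_general {G : Type*} [Group G]
    {H : Type*} [NormedAddCommGroup H] [InnerProductSpace ℂ H] [CompleteSpace H]
    (τ : G →* G)
    (S : Set G)
    (hS_star : ∀ s ∈ S, (τ s)⁻¹ ∈ S)
    (π : G → H →L[ℂ] H)
    (hπ_mul : ∀ a ∈ S, ∀ b ∈ S, π (a * b) = π a ∘L π b)
    (hπ_star : ∀ s ∈ S, π ((τ s)⁻¹) = ContinuousLinearMap.adjoint (π s))
    (h : G) (hh : τ h = h)
    (hdense₁ : Dense (↑(Submodule.span ℂ
      {w : H | ∃ s ∈ S, h * s ∈ S ∧ ∃ x : H, w = (π s) x}) : Set H))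
    (hdense₂ : Dense (↑(Submodule.span ℂ
      {w : H | ∃ s ∈ S, h * s ∈ S ∧ ∃ x : H, w = (π (h * s)) x}) : Set H)) :
    ∃ U : H →L[ℂ] H, U ∈ unitary (H →L[ℂ] H) ∧
      (∀ s ∈ S, h * s ∈ S → π (h * s) = U ∘L π s) ∧
      ∀ U' : H →L[ℂ] H, U' ∈ unitary (H →L[ℂ] H) →
        (∀ s ∈ S, h * s ∈ S → π (h * s) = U' ∘L π s) → U' = U := by
  have h_range (f : G → H →L[ℂ] H) : range (fun p : {s // s ∈ S ∧ h * s ∈ S} × H ↦ f p.1 p.2) =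
      {w : H | ∃ s ∈ S, h * s ∈ S ∧ ∃ x : H, w = f s x} := by
    ext w
    constructor
    · rintro ⟨⟨⟨s, hs, hhs⟩, x⟩, rfl⟩
      exact ⟨s, hs, hhs, x, rfl⟩
    · rintro ⟨s, hs, hhs, x, rfl⟩
      exact ⟨(⟨s, hs, hhs⟩, x), rfl⟩
  obtain ⟨U, hU⟩ := exists_linearIsometryEquiv_apply_eq_of_inner_eq
    (v := fun p : {s // s ∈ S ∧ h * s ∈ S} × H ↦ π p.1 p.2)
    (w := fun p ↦ π (h * p.1) p.2) (by rwa [h_range π]) (by rwa [h_range (π <| h * ·)])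
    fun p q ↦ inner_apply_mul_left_eq_of_fixed hS_star hπ_mul hπ_star hh
      p.1.2.1 p.1.2.2 q.1.2.1 q.1.2.2 p.2 q.2
  have hU_intertwines : ∀ s ∈ S, h * s ∈ S → π (h * s) = (U : H →L[ℂ] H) ∘L π s :=
    fun s hs hhs ↦ ContinuousLinearMap.ext fun x ↦ (hU (⟨s, hs, hhs⟩, x)).symm
  refine ⟨U, (Unitary.linearIsometryEquiv.symm U).2, hU_intertwines, fun U' _ hU' ↦ ?_⟩
  refine ContinuousLinearMap.ext_on hdense₁ ?_
  rintro _ ⟨s, hs, hhs, x, rfl⟩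
  rw [← ContinuousLinearMap.comp_apply, ← ContinuousLinearMap.comp_apply, ← hU' s hs hhs,
    ← hU_intertwines s hs hhs]

/-- For a `*`-representation `π` of a `*`-subsemigroup `S ⊆ G` and a
`τ`-fixed element `h` such that `π(S_h)H` and `π(h S_h)H` span dense subspaces of `H`,
there is a unique unitary `U` on `H` with `π(hs) = U ∘ π(s)` for all `s ∈ S_h`. -/
theorem stmt_5 {G : Type*} [Group G]
    {H : Type*} [NormedAddCommGroup H] [InnerProductSpace ℂ H] [CompleteSpace H]
    (τ : G →* G) (hτ_inv : Function.Involutive τ)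
    (S : Set G)
    (hS_mul : ∀ a ∈ S, ∀ b ∈ S, a * b ∈ S)
    (hS_star : ∀ s ∈ S, (τ s)⁻¹ ∈ S)
    (π : G → H →L[ℂ] H)
    (hπ_mul : ∀ a ∈ S, ∀ b ∈ S, π (a * b) = π a ∘L π b)
    (hπ_star : ∀ s ∈ S, π ((τ s)⁻¹) = ContinuousLinearMap.adjoint (π s))
    (h : G) (hh : τ h = h)
    (hdense₁ : Dense (↑(Submodule.span ℂ
      {w : H | ∃ s ∈ S, h * s ∈ S ∧ ∃ x : H, w = (π s) x}) : Set H))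
    (hdense₂ : Dense (↑(Submodule.span ℂ
      {w : H | ∃ s ∈ S, h * s ∈ S ∧ ∃ x : H, w = (π (h * s)) x}) : Set H)) :
    ∃ U : H →L[ℂ] H, U ∈ unitary (H →L[ℂ] H) ∧
      (∀ s ∈ S, h * s ∈ S → π (h * s) = U ∘L π s) ∧
      ∀ U' : H →L[ℂ] H, U' ∈ unitary (H →L[ℂ] H) →
        (∀ s ∈ S, h * s ∈ S → π (h * s) = U' ∘L π s) → U' = U :=
  stmt_5_general τ S hS_star π hπ_mul hπ_star h hh hdense₁ hdense₂
end

section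
/- Let G be a topological group with a continuous involutive automorphism τ, g* := τ(g)⁻¹, S ⊆ G an open *-subsemigroup, and π : S → B(H) a strongly continuous *-representation on a complex Hilbert space H. Let V ⊆ G be a symmetric set (V⁻¹ = V) consisting of τ-fixed elements such that span{π(s)v : s ∈ S_V, v ∈ H} is dense in H, where S_V := {s ∈ S : ∀h ∈ V, hs ∈ S}. Then there exists a map π^H : V → U(H) into the unitary group of H such that: (i) π(h s) = π^H(h) ∘ π(s) for all h ∈ V and all s ∈ S with hs ∈ S; (ii) h ↦ π^H(h)v is continuous on V for every v ∈ H; (iii) π^H(g) ∘ π^H(h) = π^H(gh) whenever g, h, gh ∈ V; (iv) π^H(g)* = π^H(g⁻¹) for all g ∈ V. Moreover π^H is uniquely determined by property (i). -/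
/-!
For `h ∈ V` the identity `(hs)^* (ht) = s^* t` shows that `π(s)x ↦ π(hs)x` preserves inner
products on the total family `π(S_V)H`, so it extends to an isometry `π^H(h)` of `H`. Testing
against this family and using `π(s)^* π(t) = π(s^* t)` gives `π^H(h)^* = π^H(h⁻¹)`, and then
`π^H(h) π(t) = π(ht)` for every `t ∈ S` with `ht ∈ S`. Unitarity, multiplicativity and
uniqueness are checked on the total family, and strong continuity passes from the family to all
of `H` because the operators `π^H(h)` are uniformly bounded.
-/

open Filter Topology Submodule
open scoped InnerProductSpace

section InnerProductSpace

variable {𝕜 E F : Type*} [RCLike 𝕜] [NormedAddCommGroup E] [InnerProductSpace 𝕜 E]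
  [NormedAddCommGroup F] [InnerProductSpace 𝕜 F]

theorem ext_inner_right_of_dense_span {s : Set E} (hs : Dense (span 𝕜 s : Set E)) {x y : E}
    (h : ∀ w ∈ s, ⟪x, w⟫_𝕜 = ⟪y, w⟫_𝕜) : x = y :=
  innerSL_inj.mp (ContinuousLinearMap.ext_on hs h)

theorem norm_linearCombination_eq_of_inner_eq {ι : Type*} {α : ι → E} {β : ι → F}
    (h : ∀ i j, ⟪β i, β j⟫_𝕜 = ⟪α i, α j⟫_𝕜) (l : ι →₀ 𝕜) :
    ‖Finsupp.linearCombination 𝕜 β l‖ = ‖Finsupp.linearCombination 𝕜 α l‖ := by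
  have hinner : ⟪Finsupp.linearCombination 𝕜 β l, Finsupp.linearCombination 𝕜 β l⟫_𝕜 =
      ⟪Finsupp.linearCombination 𝕜 α l, Finsupp.linearCombination 𝕜 α l⟫_𝕜 := by
    simp only [Finsupp.linearCombination_apply, Finsupp.sum, sum_inner, inner_sum,
      inner_smul_left, inner_smul_right, h]
  rw [inner_self_eq_norm_sq_to_K, inner_self_eq_norm_sq_to_K] at hinner
  exact (pow_left_inj₀ (norm_nonneg _) (norm_nonneg _) two_ne_zero).mp (mod_cast hinner)

theorem exists_linearIsometry_of_inner_eq [CompleteSpace F] {ι : Type*} {α : ι → E} {β : ι → F}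
    (h : ∀ i j, ⟪β i, β j⟫_𝕜 = ⟪α i, α j⟫_𝕜)
    (hα : Dense (span 𝕜 (Set.range α) : Set E)) :
    ∃ U : E →ₗᵢ[𝕜] F, ∀ i, U (α i) = β i := by
  set A := Finsupp.linearCombination 𝕜 α
  set B := Finsupp.linearCombination 𝕜 β
  have hnorm := norm_linearCombination_eq_of_inner_eq h
  have hA : DenseRange A := by
    rwa [DenseRange, ← LinearMap.coe_range, Finsupp.range_linearCombination]
  have hext (l : ι →₀ 𝕜) : B.extendOfNorm A (A l) = B l :=
    LinearMap.extendOfNorm_eq hA ⟨1, fun l => by rw [one_mul, hnorm]⟩ l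
  refine ⟨⟨(B.extendOfNorm A).toLinearMap, fun x => ?_⟩, fun i => ?_⟩
  · refine hA.induction ?_ (isClosed_eq (by fun_prop) continuous_norm) x
    rintro _ ⟨l, rfl⟩
    simpa [hext] using hnorm l
  · simpa [A, B] using hext (Finsupp.single i 1)

theorem ContinuousLinearMap.mem_unitary_of_norm_map [CompleteSpace E] {A : E →L[𝕜] E}
    (hA : ∀ x, ‖A x‖ = ‖x‖) (hA' : ∀ x, ‖adjoint A x‖ = ‖x‖) : A ∈ unitary (E →L[𝕜] E) := by
  rw [Unitary.mem_iff, star_eq_adjoint]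
  refine ⟨(norm_map_iff_adjoint_comp_self A).mp hA, ?_⟩
  have h := (norm_map_iff_adjoint_comp_self (adjoint A)).mp hA'
  rwa [adjoint_adjoint] at h

end InnerProductSpace

theorem continuousOn_apply_of_dense_span {X 𝕜 E F : Type*} [TopologicalSpace X]
    [NontriviallyNormedField 𝕜] [NormedAddCommGroup E] [NormedSpace 𝕜 E]
    [NormedAddCommGroup F] [NormedSpace 𝕜 F] {T : X → E →L[𝕜] F} {C : ℝ} (hT : ∀ x, ‖T x‖ ≤ C)
    {V : Set X} {s : Set E} (hs : Dense (span 𝕜 s : Set E))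
    (hcont : ∀ w ∈ s, ContinuousOn (fun x => T x w) V) (v : E) :
    ContinuousOn (fun x => T x v) V := by
  let M : Submodule 𝕜 E :=
    { carrier := {w | ContinuousOn (fun x => T x w) V}
      add_mem' := fun hu hv => (hu.add hv).congr fun x _ => map_add (T x) _ _
      zero_mem' := continuousOn_const.congr fun x _ => map_zero (T x)
      smul_mem' := fun c _ hw => (hw.const_smul c).congr fun x _ => map_smul (T x) c _ }
  have hequi : Equicontinuous fun x => (T x : E → F) :=
    ((NormedSpace.equicontinuous_TFAE T).out 5 1).mp (⟨C, hT⟩ : ∃ C, ∀ x, ‖T x‖ ≤ C)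
  have hclosed : IsClosed (M : Set E) := by
    have hM : (M : Set E) = ⋂ x₀ ∈ V, {w | Tendsto (fun x => T x w) (𝓝[V] x₀) (𝓝 (T x₀ w))} := by
      ext w; simp [M, ContinuousOn, ContinuousWithinAt]
    rw [hM]
    exact isClosed_biInter fun x₀ _ => hequi.isClosed_setOfPred_tendsto (T x₀).continuous
  have hdense : Dense (M : Set E) := hs.mono (span_le.mpr hcont)
  have hM : (M : Set E) = Set.univ := by rw [← hclosed.closure_eq, hdense.closure_eq]
  exact (hM.symm ▸ Set.mem_univ v : v ∈ (M : Set E))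

section StarRepresentation

variable {G H : Type*} [Group G] [NormedAddCommGroup H] [InnerProductSpace ℂ H]
  {τ : G →* G} {S V : Set G} {π : G → H →L[ℂ] H}

/-- The set `π(S_V)H`, where `S_V = {s ∈ S | ∀ h ∈ V, h * s ∈ S}`. -/
def admissibleRange (π : G → H →L[ℂ] H) (S V : Set G) : Set H :=
  {w | ∃ s ∈ S, (∀ h ∈ V, h * s ∈ S) ∧ ∃ x : H, w = π s x}

theorem inner_apply_apply_eq [CompleteSpace H] (hS_star : ∀ s ∈ S, (τ s)⁻¹ ∈ S)
    (hπ_mul : ∀ a ∈ S, ∀ b ∈ S, π (a * b) = π a ∘L π b)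
    (hπ_star : ∀ s ∈ S, π ((τ s)⁻¹) = ContinuousLinearMap.adjoint (π s))
    {s t : G} (hs : s ∈ S) (ht : t ∈ S) (x y : H) :
    ⟪π s x, π t y⟫_ℂ = ⟪x, π ((τ s)⁻¹ * t) y⟫_ℂ := by
  rw [hπ_mul _ (hS_star s hs) _ ht, ContinuousLinearMap.comp_apply, hπ_star s hs,
    ContinuousLinearMap.adjoint_inner_right]

theorem inv_map_mul_of_map_eq {h : G} (hh : τ h = h) (s : G) :
    (τ (h * s))⁻¹ = (τ s)⁻¹ * h⁻¹ := by
  rw [map_mul, hh, mul_inv_rev]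

theorem exists_linearIsometry_apply_eq_mul_apply [CompleteSpace H]
    (hπ : ∀ s ∈ S, ∀ t ∈ S, ∀ x y : H, ⟪π s x, π t y⟫_ℂ = ⟪x, π ((τ s)⁻¹ * t) y⟫_ℂ)
    (hdense : Dense (span ℂ (admissibleRange π S V) : Set H)) {h : G} (hh : h ∈ V)
    (hfix : τ h = h) :
    ∃ U : H →ₗᵢ[ℂ] H, ∀ s ∈ S, (∀ g ∈ V, g * s ∈ S) → ∀ x, U (π s x) = π (h * s) x := by
  let ι := {s // s ∈ S ∧ ∀ g ∈ V, g * s ∈ S} × H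
  have hrange : Set.range (fun i : ι => π i.1 i.2) = admissibleRange π S V := by
    ext w
    constructor
    · rintro ⟨⟨⟨s, hs, hsV⟩, x⟩, rfl⟩
      exact ⟨s, hs, hsV, x, rfl⟩
    · rintro ⟨s, hs, hsV, x, rfl⟩
      exact ⟨⟨⟨s, hs, hsV⟩, x⟩, rfl⟩
  obtain ⟨U, hU⟩ := exists_linearIsometry_of_inner_eq (α := fun i : ι => π i.1 i.2)
    (β := fun i : ι => π (h * i.1) i.2) (fun ⟨⟨s, hs, hsV⟩, x⟩ ⟨⟨t, ht, htV⟩, y⟩ => by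
      rw [hπ _ (hsV h hh) _ (htV h hh), hπ _ hs _ ht, inv_map_mul_of_map_eq hfix, mul_assoc,
        inv_mul_cancel_left]) (hrange ▸ hdense)
  exact ⟨U, fun s hs hsV x => hU ⟨⟨s, hs, hsV⟩, x⟩⟩

theorem exists_linearIsometry_family [CompleteSpace H]
    (hπ : ∀ s ∈ S, ∀ t ∈ S, ∀ x y : H, ⟪π s x, π t y⟫_ℂ = ⟪x, π ((τ s)⁻¹ * t) y⟫_ℂ)
    (hdense : Dense (span ℂ (admissibleRange π S V) : Set H)) (hV_fix : ∀ g ∈ V, τ g = g) :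
    ∃ U : G → H →ₗᵢ[ℂ] H, ∀ h ∈ V, ∀ s ∈ S, (∀ g ∈ V, g * s ∈ S) → ∀ x,
      U h (π s x) = π (h * s) x := by
  have hex (h : G) : ∃ U : H →ₗᵢ[ℂ] H, h ∈ V → ∀ s ∈ S, (∀ g ∈ V, g * s ∈ S) → ∀ x,
      U (π s x) = π (h * s) x := by
    by_cases hh : h ∈ V
    · obtain ⟨U, hU⟩ := exists_linearIsometry_apply_eq_mul_apply hπ hdense hh (hV_fix h hh)
      exact ⟨U, fun _ => hU⟩
    · exact ⟨LinearIsometry.id, fun hh' => absurd hh' hh⟩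
  choose U hU using hex
  exact ⟨U, fun h hh => hU h hh⟩

theorem adjoint_apply_eq_inv_mul_apply [CompleteSpace H]
    (hπ : ∀ s ∈ S, ∀ t ∈ S, ∀ x y : H, ⟪π s x, π t y⟫_ℂ = ⟪x, π ((τ s)⁻¹ * t) y⟫_ℂ)
    (hdense : Dense (span ℂ (admissibleRange π S V) : Set H))
    {A : H →L[ℂ] H} {h : G} (hh : h ∈ V) (hfix : τ h = h)
    (hA : ∀ t ∈ S, (∀ g ∈ V, g * t ∈ S) → ∀ y, A (π t y) = π (h * t) y)
    {s : G} (hs : s ∈ S) (hs' : h⁻¹ * s ∈ S) (x : H) :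
    ContinuousLinearMap.adjoint A (π s x) = π (h⁻¹ * s) x := by
  refine ext_inner_right_of_dense_span hdense ?_
  rintro _ ⟨t, ht, htV, y, rfl⟩
  rw [ContinuousLinearMap.adjoint_inner_left, hA t ht htV y, hπ _ hs _ (htV h hh), hπ _ hs' _ ht,
    inv_map_mul_of_map_eq (by rw [map_inv, hfix]), inv_inv, mul_assoc]

theorem apply_apply_eq_mul_apply [CompleteSpace H]
    (hπ : ∀ s ∈ S, ∀ t ∈ S, ∀ x y : H, ⟪π s x, π t y⟫_ℂ = ⟪x, π ((τ s)⁻¹ * t) y⟫_ℂ)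
    (hdense : Dense (span ℂ (admissibleRange π S V) : Set H))
    {A : H →L[ℂ] H} {h : G} (hh : h ∈ V) (hh' : h⁻¹ ∈ V) (hfix : τ h = h)
    (hA : ∀ t ∈ S, (∀ g ∈ V, g * t ∈ S) → ∀ y, A (π t y) = π (h * t) y)
    {t : G} (ht : t ∈ S) (hht : h * t ∈ S) (y : H) :
    A (π t y) = π (h * t) y := by
  refine ext_inner_right_of_dense_span hdense ?_
  rintro _ ⟨r, hr, hrV, x, rfl⟩
  rw [← ContinuousLinearMap.adjoint_inner_right,
    adjoint_apply_eq_inv_mul_apply hπ hdense hh hfix hA hr (hrV _ hh') x,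
    hπ _ ht _ (hrV _ hh'), hπ _ hht _ hr, inv_map_mul_of_map_eq hfix, mul_assoc]

section Family

variable {A : G → H →L[ℂ] H}

theorem adjoint_eq_apply_inv [CompleteSpace H]
    (hπ : ∀ s ∈ S, ∀ t ∈ S, ∀ x y : H, ⟪π s x, π t y⟫_ℂ = ⟪x, π ((τ s)⁻¹ * t) y⟫_ℂ)
    (hdense : Dense (span ℂ (admissibleRange π S V) : Set H))
    (hV_symm : ∀ g ∈ V, g⁻¹ ∈ V) (hV_fix : ∀ g ∈ V, τ g = g)
    (hA : ∀ h ∈ V, ∀ t ∈ S, (∀ g ∈ V, g * t ∈ S) → ∀ y, A h (π t y) = π (h * t) y)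
    {g : G} (hg : g ∈ V) : ContinuousLinearMap.adjoint (A g) = A g⁻¹ := by
  refine ContinuousLinearMap.ext_on hdense ?_
  rintro _ ⟨s, hs, hsV, x, rfl⟩
  rw [adjoint_apply_eq_inv_mul_apply hπ hdense hg (hV_fix g hg) (hA g hg) hs
    (hsV _ (hV_symm g hg)), hA _ (hV_symm g hg) s hs hsV]

theorem comp_eq_apply_mul [CompleteSpace H]
    (hπ : ∀ s ∈ S, ∀ t ∈ S, ∀ x y : H, ⟪π s x, π t y⟫_ℂ = ⟪x, π ((τ s)⁻¹ * t) y⟫_ℂ)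
    (hdense : Dense (span ℂ (admissibleRange π S V) : Set H))
    (hV_symm : ∀ g ∈ V, g⁻¹ ∈ V) (hV_fix : ∀ g ∈ V, τ g = g)
    (hA : ∀ h ∈ V, ∀ t ∈ S, (∀ g ∈ V, g * t ∈ S) → ∀ y, A h (π t y) = π (h * t) y)
    {g h : G} (hg : g ∈ V) (hh : h ∈ V) (hgh : g * h ∈ V) : A g ∘L A h = A (g * h) := by
  refine ContinuousLinearMap.ext_on hdense ?_
  rintro _ ⟨s, hs, hsV, x, rfl⟩
  have hghs : g * (h * s) ∈ S := mul_assoc g h s ▸ hsV _ hgh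
  rw [ContinuousLinearMap.comp_apply, hA h hh s hs hsV, hA _ hgh s hs hsV,
    apply_apply_eq_mul_apply hπ hdense hg (hV_symm g hg) (hV_fix g hg) (hA g hg) (hsV h hh) hghs,
    mul_assoc]

theorem continuousOn_apply_of_norm_le [TopologicalSpace G] [IsTopologicalGroup G]
    (hπ_cont : ∀ v : H, ContinuousOn (fun s => π s v) S)
    (hdense : Dense (span ℂ (admissibleRange π S V) : Set H)) {C : ℝ} (hA_norm : ∀ h, ‖A h‖ ≤ C)
    (hA : ∀ h ∈ V, ∀ t ∈ S, (∀ g ∈ V, g * t ∈ S) → ∀ y, A h (π t y) = π (h * t) y) (v : H) :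
    ContinuousOn (fun h => A h v) V := by
  refine continuousOn_apply_of_dense_span hA_norm hdense ?_ v
  rintro _ ⟨s, hs, hsV, x, rfl⟩
  exact ((hπ_cont x).comp (continuous_mul_const s).continuousOn hsV).congr
    fun h hh => hA h hh s hs hsV x

theorem eq_of_mul_eq_comp (hdense : Dense (span ℂ (admissibleRange π S V) : Set H))
    (hA : ∀ h ∈ V, ∀ t ∈ S, (∀ g ∈ V, g * t ∈ S) → ∀ y, A h (π t y) = π (h * t) y)
    {B : G → H →L[ℂ] H} (hB : ∀ h ∈ V, ∀ s ∈ S, h * s ∈ S → π (h * s) = B h ∘L π s)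
    {h : G} (hh : h ∈ V) : B h = A h := by
  refine ContinuousLinearMap.ext_on hdense ?_
  rintro _ ⟨s, hs, hsV, x, rfl⟩
  rw [hA h hh s hs hsV, hB h hh s hs (hsV h hh), ContinuousLinearMap.comp_apply]

end Family

end StarRepresentation

theorem stmt_6_general {G : Type*} [Group G] [TopologicalSpace G] [IsTopologicalGroup G]
    {H : Type*} [NormedAddCommGroup H] [InnerProductSpace ℂ H] [CompleteSpace H]
    (τ : G →* G)
    (S : Set G)
    (hS_star : ∀ s ∈ S, (τ s)⁻¹ ∈ S)
    (π : G → H →L[ℂ] H)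
    (hπ_mul : ∀ a ∈ S, ∀ b ∈ S, π (a * b) = π a ∘L π b)
    (hπ_star : ∀ s ∈ S, π ((τ s)⁻¹) = ContinuousLinearMap.adjoint (π s))
    (hπ_cont : ∀ v : H, ContinuousOn (fun s => (π s) v) S)
    (V : Set G) (hV_symm : ∀ g ∈ V, g⁻¹ ∈ V) (hV_fix : ∀ g ∈ V, τ g = g)
    (hdense : Dense (↑(Submodule.span ℂ
      {w : H | ∃ s ∈ S, (∀ h ∈ V, h * s ∈ S) ∧ ∃ x : H, w = (π s) x}) : Set H)) :
    ∃ πH : G → H →L[ℂ] H,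
      (∀ h ∈ V, πH h ∈ unitary (H →L[ℂ] H)) ∧
      (∀ h ∈ V, ∀ s ∈ S, h * s ∈ S → π (h * s) = πH h ∘L π s) ∧
      (∀ v : H, ContinuousOn (fun h => (πH h) v) V) ∧
      (∀ g ∈ V, ∀ h ∈ V, g * h ∈ V → πH g ∘L πH h = πH (g * h)) ∧
      (∀ g ∈ V, ContinuousLinearMap.adjoint (πH g) = πH g⁻¹) ∧
      (∀ πH' : G → H →L[ℂ] H,
        (∀ h ∈ V, ∀ s ∈ S, h * s ∈ S → π (h * s) = πH' h ∘L π s) →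
        ∀ h ∈ V, πH' h = πH h) := by
  have hπ : ∀ s ∈ S, ∀ t ∈ S, ∀ x y : H,
      ⟪π s x, π t y⟫_ℂ = ⟪x, π ((τ s)⁻¹ * t) y⟫_ℂ :=
    fun s hs t ht => inner_apply_apply_eq hS_star hπ_mul hπ_star hs ht
  obtain ⟨U, hU⟩ := exists_linearIsometry_family hπ hdense hV_fix
  let πH : G → H →L[ℂ] H := fun h => (U h).toContinuousLinearMap
  have hA : ∀ h ∈ V, ∀ t ∈ S, (∀ g ∈ V, g * t ∈ S) → ∀ y, πH h (π t y) = π (h * t) y := hU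
  have hadj (g : G) (hg : g ∈ V) : ContinuousLinearMap.adjoint (πH g) = πH g⁻¹ :=
    adjoint_eq_apply_inv hπ hdense hV_symm hV_fix hA hg
  refine ⟨πH, fun h hh => ?_, fun h hh s hs hhs => ?_,
    continuousOn_apply_of_norm_le hπ_cont hdense (fun h => (U h).norm_toContinuousLinearMap_le) hA,
    fun g hg h hh hgh => comp_eq_apply_mul hπ hdense hV_symm hV_fix hA hg hh hgh, hadj,
    fun B hB h hh => eq_of_mul_eq_comp hdense hA hB hh⟩
  · exact ContinuousLinearMap.mem_unitary_of_norm_map (U h).norm_map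
      (by rw [hadj h hh]; exact (U h⁻¹).norm_map)
  · ext y
    exact (apply_apply_eq_mul_apply hπ hdense hh (hV_symm h hh) (hV_fix h hh) (hA h hh) hs hhs
      y).symm

/-- Local representation of `H` attached to a locally `H`-compatible
semigroup representation: given a symmetric set `V` of `τ`-fixed elements with
`π(S_V)H` total in `H`, there is a (strongly continuous, multiplicative, `*`-compatible)
map `π^H : V → U(H)` with `π(hs) = π^H(h) ∘ π(s)`, uniquely determined by this property. -/
theorem stmt_6 {G : Type*} [Group G] [TopologicalSpace G] [IsTopologicalGroup G]
    {H : Type*} [NormedAddCommGroup H] [InnerProductSpace ℂ H] [CompleteSpace H]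
    (τ : G →* G) (hτ_inv : Function.Involutive τ) (hτ_cont : Continuous τ)
    (S : Set G) (hS_open : IsOpen S)
    (hS_mul : ∀ a ∈ S, ∀ b ∈ S, a * b ∈ S)
    (hS_star : ∀ s ∈ S, (τ s)⁻¹ ∈ S)
    (π : G → H →L[ℂ] H)
    (hπ_mul : ∀ a ∈ S, ∀ b ∈ S, π (a * b) = π a ∘L π b)
    (hπ_star : ∀ s ∈ S, π ((τ s)⁻¹) = ContinuousLinearMap.adjoint (π s))
    (hπ_cont : ∀ v : H, ContinuousOn (fun s => (π s) v) S)
    (V : Set G) (hV_symm : ∀ g ∈ V, g⁻¹ ∈ V) (hV_fix : ∀ g ∈ V, τ g = g)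
    (hdense : Dense (↑(Submodule.span ℂ
      {w : H | ∃ s ∈ S, (∀ h ∈ V, h * s ∈ S) ∧ ∃ x : H, w = (π s) x}) : Set H)) :
    ∃ πH : G → H →L[ℂ] H,
      (∀ h ∈ V, πH h ∈ unitary (H →L[ℂ] H)) ∧
      (∀ h ∈ V, ∀ s ∈ S, h * s ∈ S → π (h * s) = πH h ∘L π s) ∧
      (∀ v : H, ContinuousOn (fun h => (πH h) v) V) ∧
      (∀ g ∈ V, ∀ h ∈ V, g * h ∈ V → πH g ∘L πH h = πH (g * h)) ∧
      (∀ g ∈ V, ContinuousLinearMap.adjoint (πH g) = πH g⁻¹) ∧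
      (∀ πH' : G → H →L[ℂ] H,
        (∀ h ∈ V, ∀ s ∈ S, h * s ∈ S → π (h * s) = πH' h ∘L π s) →
        ∀ h ∈ V, πH' h = πH h) :=
  stmt_6_general τ S hS_star π hπ_mul hπ_star hπ_cont V hV_symm hV_fix hdense
end

section
/- Let G be a topological group with an involutive automorphism τ, g* := τ(g)⁻¹, S ⊆ G an open *-subsemigroup, and π : S → B(H) a *-representation on a complex Hilbert space H. Define S_reg := {s ∈ S : π(s) is injective and π(s) has dense range}. Then S_reg is an open subset of G, is closed under multiplication, and satisfies (S_reg)* = S_reg; i.e. S_reg is an open *-subsemigroup of S. -/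
/-!
Injectivity of `π(t)` is inherited from any product `π(a t) = π(a) π(t)` and density of the range
from any product `π(t b) = π(t) π(b)`. For `s ∈ S_reg` and `t` near `s`, the elements `s² t⁻¹` and
`t⁻¹ s²` are near `s`, hence in the open set `S`, and `π(s²)` is injective with dense range; so `t`
is regular. Stability under `*` comes from the Hilbert space duality between a dense range of `T`
and injectivity of `T†`.
-/

open Filter Topology ContinuousLinearMap

theorem ContinuousLinearMap.denseRange_iff_injective_adjoint {𝕜 E F : Type*} [RCLike 𝕜]
    [NormedAddCommGroup E] [InnerProductSpace 𝕜 E] [CompleteSpace E]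
    [NormedAddCommGroup F] [InnerProductSpace 𝕜 F] [CompleteSpace F] (T : E →L[𝕜] F) :
    DenseRange T ↔ Function.Injective (adjoint T) := by
  change _ ↔ Function.Injective (adjoint T : F →ₗ[𝕜] E)
  rw [← LinearMap.ker_eq_bot, ← orthogonal_range, ← Submodule.topologicalClosure_eq_top_iff,
    ← Submodule.dense_iff_topologicalClosure_eq_top]
  rfl

theorem ContinuousLinearMap.injective_iff_denseRange_adjoint {𝕜 E F : Type*} [RCLike 𝕜]
    [NormedAddCommGroup E] [InnerProductSpace 𝕜 E] [CompleteSpace E]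
    [NormedAddCommGroup F] [InnerProductSpace 𝕜 F] [CompleteSpace F] (T : E →L[𝕜] F) :
    Function.Injective T ↔ DenseRange (adjoint T) := by
  rw [denseRange_iff_injective_adjoint, adjoint_adjoint]

section OpenSemigroup

variable {G : Type*} [Group G] [TopologicalSpace G] [IsTopologicalGroup G] {S : Set G}
  {P : G → Prop} {s x : G}

theorem IsOpen.eventually_of_right_factor (hS : IsOpen S)
    (hP : ∀ a ∈ S, ∀ b ∈ S, P (a * b) → P b) (hs : s ∈ S) (hx : x * s⁻¹ ∈ S) (hPx : P x) :
    ∀ᶠ t in 𝓝 s, P t := by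
  have hcont : Continuous fun t : G => x * t⁻¹ := continuous_const.mul continuous_inv
  filter_upwards [hS.mem_nhds hs, hcont.continuousAt.preimage_mem_nhds (hS.mem_nhds hx)]
    with t ht hxt
  exact hP _ hxt t ht (by rwa [inv_mul_cancel_right])

theorem IsOpen.eventually_of_left_factor (hS : IsOpen S)
    (hP : ∀ a ∈ S, ∀ b ∈ S, P (a * b) → P a) (hs : s ∈ S) (hx : s⁻¹ * x ∈ S) (hPx : P x) :
    ∀ᶠ t in 𝓝 s, P t := by
  have hcont : Continuous fun t : G => t⁻¹ * x := continuous_inv.mul continuous_const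
  filter_upwards [hS.mem_nhds hs, hcont.continuousAt.preimage_mem_nhds (hS.mem_nhds hx)]
    with t ht hxt
  exact hP t ht _ hxt (by rwa [mul_inv_cancel_left])

end OpenSemigroup

theorem stmt_8_general {G : Type*} [Group G] [TopologicalSpace G] [IsTopologicalGroup G]
    {H : Type*} [NormedAddCommGroup H] [InnerProductSpace ℂ H] [CompleteSpace H]
    (τ : G →* G)
    (S : Set G) (hS_open : IsOpen S)
    (hS_mul : ∀ a ∈ S, ∀ b ∈ S, a * b ∈ S)
    (hS_star : ∀ s ∈ S, (τ s)⁻¹ ∈ S)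
    (π : G → H →L[ℂ] H)
    (hπ_mul : ∀ a ∈ S, ∀ b ∈ S, π (a * b) = π a ∘L π b)
    (hπ_star : ∀ s ∈ S, π ((τ s)⁻¹) = ContinuousLinearMap.adjoint (π s))
    (Sreg : Set G)
    (hSreg : Sreg = {s | s ∈ S ∧ Function.Injective ⇑(π s) ∧ DenseRange ⇑(π s)}) :
    IsOpen Sreg ∧
    (∀ a ∈ Sreg, ∀ b ∈ Sreg, a * b ∈ Sreg) ∧
    (∀ s ∈ Sreg, (τ s)⁻¹ ∈ Sreg) := by
  subst hSreg
  have hmul : ∀ a ∈ S, ∀ b ∈ S, ⇑(π (a * b)) = π a ∘ π b := fun a ha b hb => by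
    rw [hπ_mul a ha b hb, coe_comp]
  have hreg_mul : ∀ a, a ∈ S ∧ Function.Injective (π a) ∧ DenseRange (π a) →
      ∀ b, b ∈ S ∧ Function.Injective (π b) ∧ DenseRange (π b) →
      a * b ∈ S ∧ Function.Injective (π (a * b)) ∧ DenseRange (π (a * b)) := by
    rintro a ⟨ha, ha_inj, ha_dense⟩ b ⟨hb, hb_inj, hb_dense⟩
    rw [hmul a ha b hb]
    exact ⟨hS_mul a ha b hb, ha_inj.comp hb_inj, ha_dense.comp hb_dense (π a).continuous⟩
  refine ⟨isOpen_iff_mem_nhds.2 fun s hs => ?_, hreg_mul, ?_⟩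
  · obtain ⟨-, hss_inj, hss_dense⟩ := hreg_mul s hs s hs
    have hsS : s ∈ S := hs.1
    have hs_right : s * s * s⁻¹ ∈ S := by rwa [mul_inv_cancel_right]
    have hs_left : s⁻¹ * (s * s) ∈ S := by rwa [inv_mul_cancel_left]
    refine Filter.inter_mem (hS_open.mem_nhds hsS) (Filter.inter_mem ?_ ?_)
    · exact hS_open.eventually_of_right_factor (P := fun t => Function.Injective (π t))
        (fun a ha b hb h => by rw [hmul a ha b hb] at h; exact h.of_comp) hsS hs_right hss_inj
    · exact hS_open.eventually_of_left_factor (P := fun t => DenseRange (π t))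
        (fun a ha b hb h => by rw [hmul a ha b hb] at h; exact h.of_comp) hsS hs_left hss_dense
  · rintro s ⟨hs, hs_inj, hs_dense⟩
    rw [Set.mem_ofPred_eq, hπ_star s hs, ← denseRange_iff_injective_adjoint,
      ← injective_iff_denseRange_adjoint]
    exact ⟨hS_star s hs, hs_dense, hs_inj⟩

/-- The set `S_reg` of elements `s ∈ S` for which `π(s)` is injective with
dense range is an open `*`-subsemigroup of `S`. -/
theorem stmt_8 {G : Type*} [Group G] [TopologicalSpace G] [IsTopologicalGroup G]
    {H : Type*} [NormedAddCommGroup H] [InnerProductSpace ℂ H] [CompleteSpace H]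
    (τ : G →* G) (hτ_inv : Function.Involutive τ)
    (S : Set G) (hS_open : IsOpen S)
    (hS_mul : ∀ a ∈ S, ∀ b ∈ S, a * b ∈ S)
    (hS_star : ∀ s ∈ S, (τ s)⁻¹ ∈ S)
    (π : G → H →L[ℂ] H)
    (hπ_mul : ∀ a ∈ S, ∀ b ∈ S, π (a * b) = π a ∘L π b)
    (hπ_star : ∀ s ∈ S, π ((τ s)⁻¹) = ContinuousLinearMap.adjoint (π s))
    (Sreg : Set G)
    (hSreg : Sreg = {s | s ∈ S ∧ Function.Injective ⇑(π s) ∧ DenseRange ⇑(π s)}) :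
    IsOpen Sreg ∧
    (∀ a ∈ Sreg, ∀ b ∈ Sreg, a * b ∈ Sreg) ∧
    (∀ s ∈ Sreg, (τ s)⁻¹ ∈ Sreg) :=
  stmt_8_general τ S hS_open hS_mul hS_star π hπ_mul hπ_star Sreg hSreg
end

section
/- Let G be a topological group and let S, T ⊆ G be open subsemigroups with T ⊆ S. If T is dense in S and the identity element 1 lies in the closure of T, then S = T. -/
open Set Pointwise

theorem IsOpen.subset_mul_of_one_mem_closure {G : Type*} [Group G] [TopologicalSpace G]
    [IsTopologicalGroup G] {S T : Set G} (hS : IsOpen S) (hT : (1 : G) ∈ closure T) :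
    S ⊆ S * T :=
  hS.mul_closure T ▸ subset_mul_left S hT

theorem stmt_12_general {G : Type*} [Group G] [TopologicalSpace G] [IsTopologicalGroup G]
    (S T : Set G) (hS_open : IsOpen S) (hT_open : IsOpen T)
    (hT_mul : ∀ a ∈ T, ∀ b ∈ T, a * b ∈ T)
    (hTS : T ⊆ S) (hdense : S ⊆ closure T) (hone : (1 : G) ∈ closure T) :
    S = T := by
  refine Subset.antisymm ?_ hTS
  calc S ⊆ S * T := hS_open.subset_mul_of_one_mem_closure hone
    _ ⊆ closure T * T := mul_subset_mul_right hdense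
    _ = T * T := hT_open.closure_mul T
    _ ⊆ T := mul_subset_iff.2 hT_mul

/-- If `S, T` are open subsemigroups of a topological group `G` with
`T ⊆ S`, `T` dense in `S`, and `1 ∈ closure T`, then `S = T`. -/
theorem stmt_12 {G : Type*} [Group G] [TopologicalSpace G] [IsTopologicalGroup G]
    (S T : Set G) (hS_open : IsOpen S) (hT_open : IsOpen T)
    (hS_mul : ∀ a ∈ S, ∀ b ∈ S, a * b ∈ S)
    (hT_mul : ∀ a ∈ T, ∀ b ∈ T, a * b ∈ T)
    (hTS : T ⊆ S) (hdense : S ⊆ closure T) (hone : (1 : G) ∈ closure T) :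
    S = T :=
  stmt_12_general S T hS_open hT_open hT_mul hTS hdense hone
end

section
/- Let G be a topological group with a continuous involutive automorphism τ, g* := τ(g)⁻¹, S ⊆ G an open *-subsemigroup, and π : S → B(H) a strongly continuous non-degenerate *-representation on a complex Hilbert space H. Suppose there exists a continuous map c : (0,∞) → G with c(s+t) = c(s)c(t) for all s,t > 0, c(t) ∈ S and c(t)* = c(t) for all t > 0, and c(t) → 1 as t → 0⁺. Then there exists a symmetric open neighborhood B of 1 in G (B⁻¹ = B) such that span{π(s)v : s ∈ S_B, v ∈ H} is dense in H, where S_B := {s ∈ S : ∀b ∈ B, bs ∈ S}. -/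
/-!
Take `B` symmetric open with `B * c 1 ⊆ S`. If `w` is orthogonal to `π(S_B) H`, then, since
`c t * S ⊆ S_B` for `t > 1`, self-adjointness of `π (c t)` gives `π (c t) w = 0` for `t > 1`.
As `π (c t)² = π (c (2t))`, `‖π (c t) w‖² = ⟪π (c (2t)) w, w⟫`, so the vanishing propagates
down to every `t > 0`. Finally `⟪π s v, w⟫ = lim_{t → 0⁺} ⟪π (c t * s) v, w⟫ = 0` for all
`s ∈ S` by strong continuity, and non-degeneracy forces `w = 0`.
-/

open Filter Topology
open scoped InnerProductSpace

section InnerProductSpace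

variable {𝕜 E : Type*} [RCLike 𝕜] [NormedAddCommGroup E] [InnerProductSpace 𝕜 E]

theorem dense_span_iff_forall_inner_eq_zero [CompleteSpace E] {M : Set E} :
    Dense (Submodule.span 𝕜 M : Set E) ↔ ∀ w : E, (∀ m ∈ M, ⟪m, w⟫_𝕜 = 0) → w = 0 := by
  rw [Submodule.dense_iff_topologicalClosure_eq_top, Submodule.topologicalClosure_eq_top_iff,
    Submodule.eq_bot_iff]
  refine forall_congr' fun w => imp_congr_left ?_
  rw [← Submodule.span_singleton_le_iff_mem, ← Submodule.isOrtho_iff_le, Submodule.isOrtho_comm,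
    Submodule.isOrtho_span]
  simp

theorem IsSelfAdjoint.apply_eq_zero_of_apply_apply_eq_zero [CompleteSpace E] {T : E →L[𝕜] E}
    (hT : IsSelfAdjoint T) {w : E} (h : T (T w) = 0) : T w = 0 := by
  have hsq := T.apply_norm_sq_eq_inner_adjoint_left w
  rw [hT.adjoint_eq, ContinuousLinearMap.comp_apply, h, inner_zero_left, map_zero] at hsq
  simpa using hsq

theorem forall_pos_of_forall_one_lt_of_two_mul {P : ℝ → Prop}
    (hP : ∀ t > 0, P (2 * t) → P t) (hlarge : ∀ t > 1, P t) : ∀ t > 0, P t := by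
  have key : ∀ n : ℕ, ∀ t > 0, 1 < 2 ^ n * t → P t := by
    intro n
    induction n with
    | zero => exact fun t _ h => hlarge t (by simpa using h)
    | succ n ih =>
      intro t ht h
      exact hP t ht (ih (2 * t) (by positivity) (by rwa [← mul_assoc, ← pow_succ]))
  intro t ht
  obtain ⟨n, hn⟩ := pow_unbounded_of_one_lt t⁻¹ (one_lt_two (α := ℝ))
  rw [inv_lt_iff_one_lt_mul₀ ht] at hn
  exact key n t ht hn

theorem apply_eq_zero_of_forall_one_lt [CompleteSpace E] {A : ℝ → E →L[𝕜] E}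
    (hA_sa : ∀ t > 0, IsSelfAdjoint (A t)) (hA_mul : ∀ t > 0, A (t + t) = A t * A t) {w : E}
    (hw : ∀ t > 1, A t w = 0) : ∀ t > 0, A t w = 0 := by
  refine forall_pos_of_forall_one_lt_of_two_mul (fun t ht h2t => ?_) hw
  rw [two_mul, hA_mul t ht] at h2t
  exact (hA_sa t ht).apply_eq_zero_of_apply_apply_eq_zero h2t

theorem inner_eq_zero_of_tendsto_of_isSelfAdjoint [CompleteSpace E] {A : ℝ → E →L[𝕜] E}
    (hA_sa : ∀ t > 0, IsSelfAdjoint (A t)) {x w : E}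
    (hx : Tendsto (fun t => A t x) (𝓝[>] 0) (𝓝 x)) (hw : ∀ t > 0, A t w = 0) :
    ⟪x, w⟫_𝕜 = 0 := by
  refine tendsto_nhds_unique ((hx.inner tendsto_const_nhds).congr' ?_) tendsto_const_nhds
  filter_upwards [self_mem_nhdsWithin] with t ht
  rw [← (hA_sa t ht).adjoint_eq, ContinuousLinearMap.adjoint_inner_left, hw t ht, inner_zero_right]

end InnerProductSpace

section Group

variable {G : Type*} [Group G] {S : Set G}

theorem exists_isOpen_inv_mem_mul_mem [TopologicalSpace G] [IsTopologicalGroup G]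
    (hS_open : IsOpen S) {a : G} (ha : a ∈ S) :
    ∃ B : Set G, IsOpen B ∧ (1 : G) ∈ B ∧ (∀ g ∈ B, g⁻¹ ∈ B) ∧ ∀ b ∈ B, b * a ∈ S := by
  refine ⟨{g | g * a ∈ S ∧ g⁻¹ * a ∈ S}, ?_, by simpa using ha,
    fun g hg => ⟨hg.2, by simpa using hg.1⟩, fun b hb => hb.1⟩
  exact (hS_open.preimage (continuous_mul_const a)).inter
    (hS_open.preimage (continuous_inv.mul continuous_const))

theorem mul_mul_mem_of_one_lt (hS_mul : ∀ a ∈ S, ∀ b ∈ S, a * b ∈ S) {c : ℝ → G}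
    (hc_mul : ∀ s > (0:ℝ), ∀ t > (0:ℝ), c (s + t) = c s * c t) (hc_S : ∀ t > (0:ℝ), c t ∈ S)
    {b : G} (hb : b * c 1 ∈ S) {t : ℝ} (ht : 1 < t) {s : G} (hs : s ∈ S) :
    b * (c t * s) ∈ S := by
  have hsplit : c t = c 1 * c (t - 1) := by
    simpa using hc_mul 1 one_pos (t - 1) (sub_pos.mpr ht)
  rw [hsplit, mul_assoc, ← mul_assoc]
  exact hS_mul _ hb _ (hS_mul _ (hc_S _ (sub_pos.mpr ht)) _ hs)

end Group

theorem stmt_14_general {G : Type*} [Group G] [TopologicalSpace G] [IsTopologicalGroup G]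
    {H : Type*} [NormedAddCommGroup H] [InnerProductSpace ℂ H] [CompleteSpace H]
    (τ : G →* G)
    (S : Set G) (hS_open : IsOpen S)
    (hS_mul : ∀ a ∈ S, ∀ b ∈ S, a * b ∈ S)
    (π : G → H →L[ℂ] H)
    (hπ_mul : ∀ a ∈ S, ∀ b ∈ S, π (a * b) = π a ∘L π b)
    (hπ_star : ∀ s ∈ S, π ((τ s)⁻¹) = ContinuousLinearMap.adjoint (π s))
    (hπ_cont : ∀ v : H, ContinuousOn (fun s => (π s) v) S)
    (hπ_nd : Dense (↑(Submodule.span ℂ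
      {w : H | ∃ s ∈ S, ∃ v : H, w = (π s) v}) : Set H))
    (cc : ℝ → G)
    (hcc_mul : ∀ s > (0:ℝ), ∀ t > (0:ℝ), cc (s + t) = cc s * cc t)
    (hcc_S : ∀ t > (0:ℝ), cc t ∈ S)
    (hcc_sym : ∀ t > (0:ℝ), (τ (cc t))⁻¹ = cc t)
    (hcc_lim : Filter.Tendsto cc (nhdsWithin 0 (Set.Ioi (0:ℝ))) (nhds (1 : G))) :
    ∃ B : Set G, IsOpen B ∧ (1 : G) ∈ B ∧ (∀ g ∈ B, g⁻¹ ∈ B) ∧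
      Dense (↑(Submodule.span ℂ
        {w : H | ∃ s ∈ S, (∀ b ∈ B, b * s ∈ S) ∧ ∃ v : H, w = (π s) v}) : Set H) := by
  obtain ⟨B, hB_open, hB_one, hB_inv, hB_mul⟩ :=
    exists_isOpen_inv_mem_mul_mem hS_open (hcc_S 1 one_pos)
  refine ⟨B, hB_open, hB_one, hB_inv, ?_⟩
  rw [dense_span_iff_forall_inner_eq_zero] at hπ_nd ⊢
  intro w hw
  have hsa : ∀ t > 0, IsSelfAdjoint (π (cc t)) := fun t ht =>
    ContinuousLinearMap.isSelfAdjoint_iff'.mpr (hcc_sym t ht ▸ hπ_star _ (hcc_S t ht)).symm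
  have hcc_apply : ∀ t > 0, ∀ s ∈ S, ∀ v, π (cc t) (π s v) = π (cc t * s) v := fun t ht s hs v => by
    rw [hπ_mul _ (hcc_S t ht) _ hs, ContinuousLinearMap.comp_apply]
  have hlarge : ∀ t > 1, π (cc t) w = 0 := fun t ht => hπ_nd _ <| by
    rintro _ ⟨s, hs, v, rfl⟩
    have ht0 : 0 < t := one_pos.trans ht
    rw [← (hsa t ht0).adjoint_eq, ContinuousLinearMap.adjoint_inner_right, hcc_apply t ht0 s hs]
    exact hw _ ⟨_, hS_mul _ (hcc_S t ht0) _ hs,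
      fun b hb => mul_mul_mem_of_one_lt hS_mul hcc_mul hcc_S (hB_mul b hb) ht hs, v, rfl⟩
  have hdouble : ∀ t > 0, π (cc (t + t)) = π (cc t) * π (cc t) := fun t ht => by
    rw [hcc_mul t ht t ht, hπ_mul _ (hcc_S t ht) _ (hcc_S t ht)]
    rfl
  have hall := apply_eq_zero_of_forall_one_lt hsa hdouble hlarge
  refine hπ_nd w ?_
  rintro _ ⟨s, hs, v, rfl⟩
  refine inner_eq_zero_of_tendsto_of_isSelfAdjoint hsa ?_ hall
  have hcont : Tendsto (fun t => π (cc t * s) v) (𝓝[>] 0) (𝓝 (π s v)) :=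
    ((hπ_cont v).continuousAt (hS_open.mem_nhds hs)).tendsto.comp
      (by simpa using hcc_lim.mul_const s)
  refine hcont.congr' ?_
  filter_upwards [self_mem_nhdsWithin] with t ht
  exact (hcc_apply t ht s hs v).symm

/-- Under the hypotheses of Statement 13 (existence of a continuous
one-parameter semigroup of symmetric elements in `S` tending to `1`), every strongly
continuous non-degenerate `*`-representation of `S` is locally `H`-compatible: there is a
symmetric open `1`-neighborhood `B ⊆ G` such that `π(S_B)H` spans a dense subspace of `H`. -/
theorem stmt_14 {G : Type*} [Group G] [TopologicalSpace G] [IsTopologicalGroup G]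
    {H : Type*} [NormedAddCommGroup H] [InnerProductSpace ℂ H] [CompleteSpace H]
    (τ : G →* G) (hτ_inv : Function.Involutive τ) (hτ_cont : Continuous τ)
    (S : Set G) (hS_open : IsOpen S)
    (hS_mul : ∀ a ∈ S, ∀ b ∈ S, a * b ∈ S)
    (hS_star : ∀ s ∈ S, (τ s)⁻¹ ∈ S)
    (π : G → H →L[ℂ] H)
    (hπ_mul : ∀ a ∈ S, ∀ b ∈ S, π (a * b) = π a ∘L π b)
    (hπ_star : ∀ s ∈ S, π ((τ s)⁻¹) = ContinuousLinearMap.adjoint (π s))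
    (hπ_cont : ∀ v : H, ContinuousOn (fun s => (π s) v) S)
    (hπ_nd : Dense (↑(Submodule.span ℂ
      {w : H | ∃ s ∈ S, ∃ v : H, w = (π s) v}) : Set H))
    (cc : ℝ → G) (hcc_cont : ContinuousOn cc (Set.Ioi (0:ℝ)))
    (hcc_mul : ∀ s > (0:ℝ), ∀ t > (0:ℝ), cc (s + t) = cc s * cc t)
    (hcc_S : ∀ t > (0:ℝ), cc t ∈ S)
    (hcc_sym : ∀ t > (0:ℝ), (τ (cc t))⁻¹ = cc t)
    (hcc_lim : Filter.Tendsto cc (nhdsWithin 0 (Set.Ioi (0:ℝ))) (nhds (1 : G))) :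
    ∃ B : Set G, IsOpen B ∧ (1 : G) ∈ B ∧ (∀ g ∈ B, g⁻¹ ∈ B) ∧
      Dense (↑(Submodule.span ℂ
        {w : H | ∃ s ∈ S, (∀ b ∈ B, b * s ∈ S) ∧ ∃ v : H, w = (π s) v}) : Set H) :=
  stmt_14_general τ S hS_open hS_mul π hπ_mul hπ_star hπ_cont hπ_nd cc hcc_mul hcc_S hcc_sym hcc_lim
end
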